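/- On the set of parameters (ξ,η,ν,ϑ) with 0 < |ν| < 1, define Ω = dξ∧dη + ν dν∧dϑ. Fix (x,y,z) ∈ ℝ³ and consider the 2-dimensional submanifold given by ξ = x − √(1−ν²) cos(z/ν + ϑ), η = y − √(1−ν²) sin(z/ν + ϑ), parametrized by (ν,ϑ). Then the pull-back of Ω to this submanifold vanishes identically, i.e. on it dξ∧dη = −ν dν∧dϑ; the submanifold is Lagrangian for the symplectic form Ω. -/

import Mathlib

/-!
Write `(ξ, η) = (x, y) - r (cos θ, sin θ)` with `r = √(1 - ν²)` and `θ = z/ν + ϑ`. In these polar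
coordinates `dξ ∧ dη = r dr ∧ dθ`, and since `dθ = -(z/ν²) dν + dϑ` only its `dϑ` part survives
against `dr = r' dν`, giving `dξ ∧ dη = r r' dν ∧ dϑ`. Differentiating `r² = 1 - ν²` gives
`r r' = -ν`, which cancels `ν dν ∧ dϑ`.
-/

open Real ContinuousLinearMap

def areaForm (u v : ℝ × ℝ) : ℝ := u.1 * v.2 - v.1 * u.2

section Polar

variable {E : Type*} [NormedAddCommGroup E] [NormedSpace ℝ E]
  {R Θ : E → ℝ} {R' Θ' : E →L[ℝ] ℝ} {q : E}

theorem hasFDerivAt_sub_polar (x y : ℝ) (hR : HasFDerivAt R R' q) (hΘ : HasFDerivAt Θ Θ' q) :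
    HasFDerivAt (fun p => (x - R p * cos (Θ p), y - R p * sin (Θ p)))
      ((-(cos (Θ q) • R') + (R q * sin (Θ q)) • Θ').prod
        (-(sin (Θ q) • R') - (R q * cos (Θ q)) • Θ')) q := by
  have hcos := (hasDerivAt_cos (Θ q)).comp_hasFDerivAt q hΘ
  have hsin := (hasDerivAt_sin (Θ q)).comp_hasFDerivAt q hΘ
  refine ((hasFDerivAt_const x q).sub (hR.mul hcos)).prodMk
    ((hasFDerivAt_const y q).sub (hR.mul hsin)) |>.congr_fderiv ?_
  ext w <;> simp only [Function.comp_apply, prod_apply, add_apply, sub_apply, neg_apply,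
    smul_apply, smul_eq_mul, zero_apply] <;> ring

theorem areaForm_sub_polar (R' Θ' : E →L[ℝ] ℝ) (r θ : ℝ) (w₁ w₂ : E) :
    let F' := (-(cos θ • R') + (r * sin θ) • Θ').prod (-(sin θ • R') - (r * cos θ) • Θ')
    areaForm (F' w₁) (F' w₂) = r * (R' w₁ * Θ' w₂ - R' w₂ * Θ' w₁) := by
  simp only [areaForm, prod_apply, add_apply, sub_apply, neg_apply, smul_apply, smul_eq_mul]
  linear_combination (r * (R' w₁ * Θ' w₂ - R' w₂ * Θ' w₁)) * sin_sq_add_cos_sq θ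

end Polar

theorem hasFDerivAt_sqrt_one_sub_fst_sq {q : ℝ × ℝ} (hq : 0 < 1 - q.1 ^ 2) :
    HasFDerivAt (fun p : ℝ × ℝ => √(1 - p.1 ^ 2)) ((-(q.1 / √(1 - q.1 ^ 2))) • fst ℝ ℝ ℝ) q := by
  have h : HasDerivAt (fun t : ℝ => √(1 - t ^ 2)) (-(q.1 / √(1 - q.1 ^ 2))) q.1 := by
    convert ((hasDerivAt_pow 2 q.1).const_sub 1).sqrt hq.ne' using 1
    ring
  exact h.comp_hasFDerivAt (f := Prod.fst) q (hasFDerivAt_fst (𝕜 := ℝ))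

theorem hasFDerivAt_div_fst_add_snd (z : ℝ) {q : ℝ × ℝ} (hq : q.1 ≠ 0) :
    HasFDerivAt (fun p : ℝ × ℝ => z / p.1 + p.2) ((-(z / q.1 ^ 2)) • fst ℝ ℝ ℝ + snd ℝ ℝ ℝ) q := by
  have h : HasDerivAt (fun t : ℝ => z / t) (-(z / q.1 ^ 2)) q.1 := by
    simpa [div_eq_mul_inv] using (hasDerivAt_inv hq).const_mul z
  exact (h.comp_hasFDerivAt (f := Prod.fst) q (hasFDerivAt_fst (𝕜 := ℝ))).add hasFDerivAt_snd

/-- With `Ω = dξ∧dη + ν dν∧dϑ` on path space (coordinates `((ξ,η),(ν,ϑ))`),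
the 2-submanifold of spiral paths through a fixed point `(x,y,z)`, parametrized
by `(ν,ϑ)` with `0 < |ν| < 1` via
`ξ = x − √(1−ν²)cos(z/ν+ϑ)`, `η = y − √(1−ν²)sin(z/ν+ϑ)`, is Lagrangian:
the pull-back of `Ω` vanishes identically. -/
theorem stmt_17 (x y z : ℝ) :
    let ψ : ℝ × ℝ → (ℝ × ℝ) × (ℝ × ℝ) := fun q =>
      ((x - Real.sqrt (1 - q.1 ^ 2) * Real.cos (z / q.1 + q.2),
        y - Real.sqrt (1 - q.1 ^ 2) * Real.sin (z / q.1 + q.2)), q)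
    ∀ q : ℝ × ℝ, 0 < |q.1| → |q.1| < 1 →
    ∀ w₁ w₂ : ℝ × ℝ,
      ((fderiv ℝ ψ q w₁).1.1 * (fderiv ℝ ψ q w₂).1.2
          - (fderiv ℝ ψ q w₂).1.1 * (fderiv ℝ ψ q w₁).1.2)
        + q.1 * ((fderiv ℝ ψ q w₁).2.1 * (fderiv ℝ ψ q w₂).2.2
          - (fderiv ℝ ψ q w₂).2.1 * (fderiv ℝ ψ q w₁).2.2) = 0 := by
  intro ψ q hν₀ hν₁ w₁ w₂
  have hν : q.1 ≠ 0 := abs_pos.mp hν₀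
  have hr : 0 < 1 - q.1 ^ 2 := sub_pos.mpr ((sq_lt_one_iff_abs_lt_one _).mpr hν₁)
  have hF := hasFDerivAt_sub_polar x y (hasFDerivAt_sqrt_one_sub_fst_sq hr)
    (hasFDerivAt_div_fst_add_snd z hν)
  simp only [ψ, hF.differentiableAt.fderiv_prodMk differentiableAt_fun_id, fderiv_fun_id,
    prod_apply, coe_id', id_eq]
  change areaForm _ _ + q.1 * areaForm w₁ w₂ = 0
  rw [hF.fderiv, areaForm_sub_polar]
  simp only [areaForm, add_apply, smul_apply, smul_eq_mul, coe_fst', coe_snd']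
  field_simp
  ring
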